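/- Fix k ≥ 2 and let u: [0,1] → M_k(ℂ) ⊗ M_k(ℂ) be any continuous path of unitaries with u_0 = 1 and u_1 = ∑_{i,j=1}^{k} e_{i,j} ⊗ e_{j,i}. Define w(t) = u_t + cos(πt/2)·(1 ⊗ e_{k+1,k+1}) ∈ M_k ⊗ M_{k+1} and ψ(x)(t) = w(t)(x ⊗ 1)w(t)* for x ∈ M_k. Then the map x ↦ ψ(x) is linear and satisfies: (i) ‖ψ(x)‖ ≤ ‖x‖ for all x ∈ M_k; (ii) if x ∈ M_k is positive semidefinite then ψ(x)(t) is positive semidefinite for every t ∈ [0,1]; (iii) ψ has order zero: if x, y ∈ M_k satisfy xy = 0, then ψ(x)·ψ(y) = 0. -/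

import Mathlib

open scoped Kronecker Matrix.Norms.L2Operator ComplexOrder

/-- Membership in the dimension drop algebra
`Z_{p,q} = {f ∈ C([0,1], M_p ⊗ M_q) : f(0) ∈ M_p ⊗ 1, f(1) ∈ 1 ⊗ M_q}`,
where `M_p ⊗ M_q` is realized as matrices indexed by `Fin p × Fin q` via the Kronecker
product. -/
def MemDimDrop (p q : ℕ) (f : ℝ → Matrix (Fin p × Fin q) (Fin p × Fin q) ℂ) : Prop :=
  ContinuousOn f (Set.Icc 0 1) ∧
  (∃ A : Matrix (Fin p) (Fin p) ℂ, f 0 = A ⊗ₖ (1 : Matrix (Fin q) (Fin q) ℂ)) ∧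
  (∃ B : Matrix (Fin q) (Fin q) ℂ, f 1 = (1 : Matrix (Fin p) (Fin p) ℂ) ⊗ₖ B)

/-- The corner embedding `M_k ⊗ M_k ⊂ M_k ⊗ M_{k+1}`, given by the identity on the first
tensor factor and the upper-left corner embedding `M_k ⊂ M_{k+1}` on the second. -/
def cornerEmbed (k : ℕ) (A : Matrix (Fin k × Fin k) (Fin k × Fin k) ℂ) :
    Matrix (Fin k × Fin (k + 1)) (Fin k × Fin (k + 1)) ℂ :=
  Matrix.of fun x y =>
    if h : (x.2 : ℕ) < k ∧ (y.2 : ℕ) < k then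
      A (x.1, ⟨x.2, h.1⟩) (y.1, ⟨y.2, h.2⟩)
    else 0

/-- The path `w(t) = u_t + cos(πt/2)·(1 ⊗ e_{k+1,k+1}) ∈ M_k ⊗ M_{k+1}`, where
`u_t ∈ M_k ⊗ M_k` is regarded as an element of `M_k ⊗ M_{k+1}` via the corner embedding. -/
noncomputable def wPath (k : ℕ) (u : ℝ → Matrix (Fin k × Fin k) (Fin k × Fin k) ℂ)
    (t : ℝ) : Matrix (Fin k × Fin (k + 1)) (Fin k × Fin (k + 1)) ℂ :=
  cornerEmbed k (u t) +
    (Real.cos (Real.pi * t / 2) : ℂ) •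
      ((1 : Matrix (Fin k) (Fin k) ℂ) ⊗ₖ
        Matrix.single (Fin.last k) (Fin.last k) (1 : ℂ))

/-- The map `ψ(x)(t) = w(t) (x ⊗ 1) w(t)*` for `x ∈ M_k`. -/
noncomputable def psiMap (k : ℕ) (u : ℝ → Matrix (Fin k × Fin k) (Fin k × Fin k) ℂ)
    (x : Matrix (Fin k) (Fin k) ℂ) (t : ℝ) :
    Matrix (Fin k × Fin (k + 1)) (Fin k × Fin (k + 1)) ℂ :=
  wPath k u t * (x ⊗ₖ (1 : Matrix (Fin (k + 1)) (Fin (k + 1)) ℂ)) * star (wPath k u t)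

/-- The element `v = ∑_{j=1}^{k} e_{1,j} ⊗ e_{j,k+1} ∈ M_k ⊗ M_{k+1}` (`0`-indexed:
`v = ∑_j e_{0,j} ⊗ e_{j,k}`). -/
noncomputable def vElem (k : ℕ) (hk : 0 < k) :
    Matrix (Fin k × Fin (k + 1)) (Fin k × Fin (k + 1)) ℂ :=
  ∑ j : Fin k,
    Matrix.single (⟨0, hk⟩ : Fin k) j (1 : ℂ) ⊗ₖ
      Matrix.single j.castSucc (Fin.last k) (1 : ℂ)

/-- The function `s(t) = sin(πt/2)·w(t)·v`. -/
noncomputable def sElem (k : ℕ) (hk : 0 < k)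
    (u : ℝ → Matrix (Fin k × Fin k) (Fin k × Fin k) ℂ) (t : ℝ) :
    Matrix (Fin k × Fin (k + 1)) (Fin k × Fin (k + 1)) ℂ :=
  (Real.sin (Real.pi * t / 2) : ℂ) • (wPath k u t * vElem k hk)

/-!
Inside `M_k ⊗ M_{k+1}` the corner `u_t` and `cos(πt/2)·(1 ⊗ e_{k+1,k+1})` live on orthogonal
blocks, so `w(t)* w(t) = 1 - (1 - cos²(πt/2))·(1 ⊗ e_{k+1,k+1})`. This is at most `1`, whence
`‖w(t)‖ ≤ 1`, and it commutes with `M_k ⊗ 1`, whence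
`ψ(x)(t) ψ(y)(t) = w(t) ((xy) ⊗ 1) w(t)* w(t) w(t)*`, which vanishes when `xy = 0`.
Contractivity also uses that `x ↦ x ⊗ 1` is a ⋆-homomorphism of C⋆-algebras, hence contractive,
and positivity is preserved by the conjugation `a ↦ w a w*`.
-/

open scoped MatrixOrder

namespace Matrix

variable {R m n : Type*} [CommSemiring R] [Fintype m] [DecidableEq m] [Fintype n] [DecidableEq n]

theorem commute_kronecker_one_one_kronecker (x : Matrix m m R) (y : Matrix n n R) :
    Commute (x ⊗ₖ (1 : Matrix n n R)) ((1 : Matrix m m R) ⊗ₖ y) := by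
  simp only [Commute, SemiconjBy, ← mul_kronecker_mul, one_mul, mul_one]

variable [StarRing R]

def kroneckerOneStarAlgHom : Matrix m m R →⋆ₐ[R] Matrix (m × n) (m × n) R where
  toFun x := x ⊗ₖ 1
  map_one' := one_kronecker_one
  map_mul' x y := by rw [← mul_kronecker_mul, one_mul]
  map_zero' := zero_kronecker _
  map_add' x y := add_kronecker _ _ _
  commutes' c := by
    simp only [Algebra.algebraMap_eq_smul_one, smul_kronecker, one_kronecker_one]
  map_star' x := by simp [star_eq_conjTranspose, conjTranspose_kronecker]

end Matrix

noncomputable def lastProj (k : ℕ) : Matrix (Fin k × Fin (k + 1)) (Fin k × Fin (k + 1)) ℂ :=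
  (1 : Matrix (Fin k) (Fin k) ℂ) ⊗ₖ Matrix.single (Fin.last k) (Fin.last k) 1

section cornerEmbed

variable {k : ℕ}

@[simp]
theorem cornerEmbed_apply_castSucc (A : Matrix (Fin k × Fin k) (Fin k × Fin k) ℂ)
    (i i' j j' : Fin k) :
    cornerEmbed k A (i, j.castSucc) (i', j'.castSucc) = A (i, j) (i', j') := by
  simp [cornerEmbed]

@[simp]
theorem cornerEmbed_apply_last_left (A : Matrix (Fin k × Fin k) (Fin k × Fin k) ℂ)
    (i : Fin k) (y : Fin k × Fin (k + 1)) : cornerEmbed k A (i, Fin.last k) y = 0 := by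
  simp [cornerEmbed]

@[simp]
theorem cornerEmbed_apply_last_right (A : Matrix (Fin k × Fin k) (Fin k × Fin k) ℂ)
    (x : Fin k × Fin (k + 1)) (i : Fin k) : cornerEmbed k A x (i, Fin.last k) = 0 := by
  simp [cornerEmbed]

theorem cornerEmbed_mul (A B : Matrix (Fin k × Fin k) (Fin k × Fin k) ℂ) :
    cornerEmbed k A * cornerEmbed k B = cornerEmbed k (A * B) := by
  ext ⟨i, j⟩ ⟨i', j'⟩
  cases j using Fin.lastCases <;> cases j' using Fin.lastCases <;>
    simp [Matrix.mul_apply, Fintype.sum_prod_type, Fin.sum_univ_castSucc]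

theorem star_cornerEmbed (A : Matrix (Fin k × Fin k) (Fin k × Fin k) ℂ) :
    star (cornerEmbed k A) = cornerEmbed k (star A) := by
  ext ⟨i, j⟩ ⟨i', j'⟩
  cases j using Fin.lastCases <;> cases j' using Fin.lastCases <;> simp

theorem cornerEmbed_one : cornerEmbed k 1 = 1 - lastProj k := by
  ext ⟨i, j⟩ ⟨i', j'⟩
  cases j using Fin.lastCases <;> cases j' using Fin.lastCases <;>
    simp [lastProj, Matrix.one_apply, (Fin.castSucc_ne_last _).symm]

theorem cornerEmbed_mul_lastProj (A : Matrix (Fin k × Fin k) (Fin k × Fin k) ℂ) :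
    cornerEmbed k A * lastProj k = 0 := by
  ext ⟨i, j⟩ ⟨i', j'⟩
  cases j using Fin.lastCases <;> cases j' using Fin.lastCases <;>
    simp [lastProj, Matrix.mul_apply, Fintype.sum_prod_type, Matrix.single_apply,
      (Fin.castSucc_ne_last _).symm]

end cornerEmbed

theorem CStarAlgebra.norm_le_one_of_star_mul_self_le_one {A : Type*} [CStarAlgebra A]
    [PartialOrder A] [StarOrderedRing A] {a : A} (h : star a * a ≤ 1) : ‖a‖ ≤ 1 := by
  have h' := (norm_le_one_iff_of_nonneg (star a * a) (star_mul_self_nonneg a)).mpr h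
  rw [CStarRing.norm_star_mul_self] at h'
  exact (sq_le_one_iff₀ (norm_nonneg a)).mp (by rwa [sq])

section lastProj

variable {k : ℕ}

theorem isStarProjection_lastProj : IsStarProjection (lastProj k) where
  isIdempotentElem := by
    rw [IsIdempotentElem, lastProj, ← Matrix.mul_kronecker_mul, one_mul,
      Matrix.single_mul_single_same, one_mul]
  isSelfAdjoint := by
    simp [IsSelfAdjoint, lastProj, Matrix.star_eq_conjTranspose, Matrix.conjTranspose_kronecker]

theorem lastProj_mul_cornerEmbed (A : Matrix (Fin k × Fin k) (Fin k × Fin k) ℂ) :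
    lastProj k * cornerEmbed k A = 0 := by
  rw [← star_star (lastProj k * _), star_mul, star_cornerEmbed,
    isStarProjection_lastProj.isSelfAdjoint.star_eq, cornerEmbed_mul_lastProj, star_zero]

theorem star_mul_self_cornerEmbed_add_smul_lastProj
    {U : Matrix (Fin k × Fin k) (Fin k × Fin k) ℂ} (hU : star U * U = 1) (c : ℝ) :
    star (cornerEmbed k U + (c : ℂ) • lastProj k) * (cornerEmbed k U + (c : ℂ) • lastProj k) =
      1 - (1 - c ^ 2) • lastProj k := by
  have hP := isStarProjection_lastProj (k := k)
  simp only [Complex.coe_smul, star_add, star_smul, star_trivial, star_cornerEmbed,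
    hP.isSelfAdjoint.star_eq, add_mul, mul_add, cornerEmbed_mul, hU, cornerEmbed_one,
    mul_smul_comm, smul_mul_assoc, cornerEmbed_mul_lastProj, lastProj_mul_cornerEmbed,
    hP.isIdempotentElem.eq, smul_zero, zero_add, add_zero, smul_smul]
  rw [sub_smul, one_smul, sq]
  abel

end lastProj

section psiMap

variable {k : ℕ} {u : ℝ → Matrix (Fin k × Fin k) (Fin k × Fin k) ℂ} {t : ℝ}

theorem wPath_eq_cornerEmbed_add_smul_lastProj :
    wPath k u t = cornerEmbed k (u t) + (Real.cos (Real.pi * t / 2) : ℂ) • lastProj k :=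
  rfl

theorem star_wPath_mul_wPath (hu : star (u t) * u t = 1) :
    star (wPath k u t) * wPath k u t =
      1 - (1 - Real.cos (Real.pi * t / 2) ^ 2) • lastProj k := by
  rw [wPath_eq_cornerEmbed_add_smul_lastProj, star_mul_self_cornerEmbed_add_smul_lastProj hu]

theorem norm_wPath_le_one (hu : star (u t) * u t = 1) : ‖wPath k u t‖ ≤ 1 := by
  refine CStarAlgebra.norm_le_one_of_star_mul_self_le_one ?_
  rw [star_wPath_mul_wPath hu, sub_le_self_iff]
  exact smul_nonneg (sub_nonneg.mpr (Real.cos_sq_le_one _)) isStarProjection_lastProj.nonneg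

theorem psiMap_add (x y : Matrix (Fin k) (Fin k) ℂ) :
    psiMap k u (x + y) t = psiMap k u x t + psiMap k u y t := by
  simp only [psiMap, Matrix.add_kronecker, mul_add, add_mul]

theorem psiMap_smul (c : ℂ) (x : Matrix (Fin k) (Fin k) ℂ) :
    psiMap k u (c • x) t = c • psiMap k u x t := by
  simp only [psiMap, Matrix.smul_kronecker, mul_smul_comm, smul_mul_assoc]

theorem norm_psiMap_le (hu : star (u t) * u t = 1) (x : Matrix (Fin k) (Fin k) ℂ) :
    ‖psiMap k u x t‖ ≤ ‖x‖ := by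
  have hx : ‖x ⊗ₖ (1 : Matrix (Fin (k + 1)) (Fin (k + 1)) ℂ)‖ ≤ ‖x‖ :=
    NonUnitalStarAlgHom.norm_apply_le Matrix.kroneckerOneStarAlgHom x
  calc ‖psiMap k u x t‖
      ≤ ‖wPath k u t‖ * ‖x ⊗ₖ (1 : Matrix (Fin (k + 1)) (Fin (k + 1)) ℂ)‖ *
          ‖star (wPath k u t)‖ := norm_mul₃_le
    _ ≤ 1 * ‖x‖ * 1 := by rw [norm_star]; gcongr <;> exact norm_wPath_le_one hu
    _ = ‖x‖ := by ring

theorem posSemidef_psiMap {x : Matrix (Fin k) (Fin k) ℂ} (hx : x.PosSemidef) :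
    (psiMap k u x t).PosSemidef :=
  (hx.kronecker Matrix.PosSemidef.one).mul_mul_conjTranspose_same _

theorem commute_kronecker_one_star_wPath_mul_wPath (hu : star (u t) * u t = 1)
    (x : Matrix (Fin k) (Fin k) ℂ) :
    Commute (x ⊗ₖ (1 : Matrix (Fin (k + 1)) (Fin (k + 1)) ℂ))
      (star (wPath k u t) * wPath k u t) := by
  rw [star_wPath_mul_wPath hu]
  exact (Commute.one_right _).sub_right
    ((Matrix.commute_kronecker_one_one_kronecker _ _).smul_right _)

theorem psiMap_mul_psiMap (hu : star (u t) * u t = 1) (x y : Matrix (Fin k) (Fin k) ℂ) :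
    psiMap k u x t * psiMap k u y t =
      wPath k u t * ((x * y) ⊗ₖ 1 * (star (wPath k u t) * wPath k u t)) * star (wPath k u t) := by
  calc psiMap k u x t * psiMap k u y t
      = wPath k u t * (x ⊗ₖ 1 * ((star (wPath k u t) * wPath k u t) * y ⊗ₖ 1)) *
          star (wPath k u t) := by simp only [psiMap, mul_assoc]
    _ = _ := by
      rw [← (commute_kronecker_one_star_wPath_mul_wPath hu y).eq, ← mul_assoc (x ⊗ₖ 1),
        ← Matrix.mul_kronecker_mul, one_mul]

end psiMap

theorem psiMap_linear_cpc_orderZero_general (k : ℕ)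
    (u : ℝ → Matrix (Fin k × Fin k) (Fin k × Fin k) ℂ)
    (hu_unitary : ∀ t ∈ Set.Icc (0 : ℝ) 1, u t ∈ Matrix.unitaryGroup (Fin k × Fin k) ℂ) :
    -- the map x ↦ ψ(x) is linear
    (∀ x y : Matrix (Fin k) (Fin k) ℂ, ∀ t ∈ Set.Icc (0 : ℝ) 1,
      psiMap k u (x + y) t = psiMap k u x t + psiMap k u y t) ∧
    (∀ (c : ℂ) (x : Matrix (Fin k) (Fin k) ℂ), ∀ t ∈ Set.Icc (0 : ℝ) 1,
      psiMap k u (c • x) t = c • psiMap k u x t) ∧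
    -- (i) ψ is contractive: ‖ψ(x)‖ ≤ ‖x‖
    (∀ x : Matrix (Fin k) (Fin k) ℂ, ∀ t ∈ Set.Icc (0 : ℝ) 1,
      ‖psiMap k u x t‖ ≤ ‖x‖) ∧
    -- (ii) ψ is positive
    (∀ x : Matrix (Fin k) (Fin k) ℂ, x.PosSemidef →
      ∀ t ∈ Set.Icc (0 : ℝ) 1, (psiMap k u x t).PosSemidef) ∧
    -- (iii) ψ has order zero
    (∀ x y : Matrix (Fin k) (Fin k) ℂ, x * y = 0 →
      ∀ t ∈ Set.Icc (0 : ℝ) 1, psiMap k u x t * psiMap k u y t = 0) := by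
  have hu t (ht : t ∈ Set.Icc (0 : ℝ) 1) := Unitary.star_mul_self_of_mem (hu_unitary t ht)
  refine ⟨fun x y t _ => psiMap_add x y, fun c x t _ => psiMap_smul c x,
    fun x t ht => norm_psiMap_le (hu t ht) x, fun x hx t _ => posSemidef_psiMap hx,
    fun x y hxy t ht => ?_⟩
  rw [psiMap_mul_psiMap (hu t ht), hxy, Matrix.zero_kronecker, zero_mul, mul_zero, zero_mul]

/-- Given `k ≥ 2` and a continuous path `u` of unitaries in `M_k ⊗ M_k` from `1` to the
flip unitary, the map `x ↦ ψ(x)`, `ψ(x)(t) = w(t)(x ⊗ 1)w(t)*`, is a linear map which is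
contractive, positive, and has order zero. -/
theorem psiMap_linear_cpc_orderZero (k : ℕ) (hk : 2 ≤ k)
    (u : ℝ → Matrix (Fin k × Fin k) (Fin k × Fin k) ℂ)
    (hu_cont : ContinuousOn u (Set.Icc 0 1))
    (hu_unitary : ∀ t ∈ Set.Icc (0 : ℝ) 1, u t ∈ Matrix.unitaryGroup (Fin k × Fin k) ℂ)
    (hu0 : u 0 = 1)
    (hu1 : u 1 = ∑ i : Fin k, ∑ j : Fin k,
      Matrix.single i j (1 : ℂ) ⊗ₖ Matrix.single j i (1 : ℂ)) :
    -- the map x ↦ ψ(x) is linear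
    (∀ x y : Matrix (Fin k) (Fin k) ℂ, ∀ t ∈ Set.Icc (0 : ℝ) 1,
      psiMap k u (x + y) t = psiMap k u x t + psiMap k u y t) ∧
    (∀ (c : ℂ) (x : Matrix (Fin k) (Fin k) ℂ), ∀ t ∈ Set.Icc (0 : ℝ) 1,
      psiMap k u (c • x) t = c • psiMap k u x t) ∧
    -- (i) ψ is contractive: ‖ψ(x)‖ ≤ ‖x‖
    (∀ x : Matrix (Fin k) (Fin k) ℂ, ∀ t ∈ Set.Icc (0 : ℝ) 1,
      ‖psiMap k u x t‖ ≤ ‖x‖) ∧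
    -- (ii) ψ is positive
    (∀ x : Matrix (Fin k) (Fin k) ℂ, x.PosSemidef →
      ∀ t ∈ Set.Icc (0 : ℝ) 1, (psiMap k u x t).PosSemidef) ∧
    -- (iii) ψ has order zero
    (∀ x y : Matrix (Fin k) (Fin k) ℂ, x * y = 0 →
      ∀ t ∈ Set.Icc (0 : ℝ) 1, psiMap k u x t * psiMap k u y t = 0) :=
  psiMap_linear_cpc_orderZero_general k u hu_unitary
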